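/- arXiv:math/0412021 — 9 statements merged into one kernel-verified Lean document; each statement's English description precedes it below -/
import Mathlib

section
/- In a paramixed complex, the operators b and B descend to the quotient θⁿ = ⊕_{j<n} M_j ⊕ M_n/b(M_{n+1}), and the total boundary ∂ = B + b on θⁿ (graded by parity) satisfies ∂² = id − T, i.e. θⁿ is a paracomplex. -/
/-- For a paramixed complex `M` (operators `b` of degree `−1` and `B` of degree
`+1` with `b² = 0`, `B² = 0`, `bB + Bb = id − T`, where the symmetry `T` commutes with all
morphisms), the operators `b`, `B` (and `T`) descend to the truncation
`θⁿ = M₀ ⊕ ⋯ ⊕ M_{n−1} ⊕ Mₙ/b(M_{n+1})` (here `n = p + 2`), and the total boundary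
`∂ = B + b` on `θⁿ` satisfies `∂² = id − T`, i.e. `θⁿ` is a paracomplex; the identity
`∂² = id − T` is expressed componentwise: in interior degrees, in degree `n − 1`
(where the `b` of the top quotient enters) and on the top quotient itself. -/
theorem paramixed_truncation_is_paracomplex
    {R : Type*} [CommRing R] (M : ℕ → Type*)
    [∀ n, AddCommGroup (M n)] [∀ n, Module R (M n)]
    (b : ∀ n, M (n + 1) →ₗ[R] M n) (B : ∀ n, M n →ₗ[R] M (n + 1))
    (T : ∀ n, M n →ₗ[R] M n)
    (hb2 : ∀ (n : ℕ) (x : M (n + 2)), b n (b (n + 1) x) = 0)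
    (hB2 : ∀ (n : ℕ) (x : M n), B (n + 1) (B n x) = 0)
    (hbB0 : ∀ x : M 0, b 0 (B 0 x) = x - T 0 x)
    (hbB : ∀ (n : ℕ) (x : M (n + 1)),
      b (n + 1) (B (n + 1) x) + B n (b n x) = x - T (n + 1) x)
    (hTb : ∀ (n : ℕ) (x : M (n + 1)), T n (b n x) = b n (T (n + 1) x))
    (hTB : ∀ (n : ℕ) (x : M n), T (n + 1) (B n x) = B n (T n x)) :
    ∀ p : ℕ,
      -- b descends to the top quotient M (p+2) ⧸ b(M (p+3)) ...
      ∃ bbar : (M (p + 2) ⧸ LinearMap.range (b (p + 2))) →ₗ[R] M (p + 1),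
        (∀ x : M (p + 2), bbar (Submodule.Quotient.mk x) = b (p + 1) x) ∧
      -- ... and T descends to the top quotient:
      (∃ Tbar : (M (p + 2) ⧸ LinearMap.range (b (p + 2))) →ₗ[R]
          (M (p + 2) ⧸ LinearMap.range (b (p + 2))),
        ∀ x : M (p + 2),
          Tbar (Submodule.Quotient.mk x) = Submodule.Quotient.mk (T (p + 2) x)) ∧
      -- ∂² = id − T on θ^{p+2}, componentwise:
      -- degree 0:
      (∀ x : M 0, b 0 (B 0 x) = x - T 0 x) ∧
      -- interior degrees j + 1 ≤ p:
      (∀ (j : ℕ), j + 1 ≤ p → ∀ x : M (j + 1),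
        b (j + 1) (B (j + 1) x) + B j (b j x) = x - T (j + 1) x) ∧
      -- degree p + 1, where B lands in the top quotient and comes back via bbar:
      (∀ x : M (p + 1),
        bbar (Submodule.Quotient.mk (B (p + 1) x)) + B p (b p x) = x - T (p + 1) x) ∧
      -- top quotient degree p + 2 (B out of the top is truncated to 0):
      (∀ x : M (p + 2),
        (Submodule.Quotient.mk (B (p + 1) (b (p + 1) x)) :
            M (p + 2) ⧸ LinearMap.range (b (p + 2)))
          = Submodule.Quotient.mk x - Submodule.Quotient.mk (T (p + 2) x)) := by
  intro p
  have hsub : LinearMap.range (b (p + 2)) ≤ LinearMap.ker (b (p + 1)) := by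
    rintro _ ⟨y, rfl⟩
    exact hb2 (p + 1) y
  refine ⟨Submodule.liftQ _ (b (p + 1)) hsub, fun x => rfl,
    ⟨Submodule.mapQ _ _ (T (p + 2)) ?_, fun x => rfl⟩,
    hbB0, fun j _ x => hbB j x, fun x => by simpa using hbB p x, fun x => ?_⟩
  · rintro _ ⟨y, rfl⟩
    exact ⟨T (p + 3) y, (hTb (p + 2) y).symm⟩
  · rw [← Submodule.Quotient.mk_sub, Submodule.Quotient.eq]
    refine ⟨-B (p + 2) x, ?_⟩
    have h := (sub_eq_of_eq_add (hbB (p + 1) x).symm).symm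
    rw [map_neg, h]
    abel
end

section
/- The equivariant Hochschild operator b_G on equivariant differential forms satisfies b_G² = 0. -/
/-- The equivariant Hochschild operator `b_G` on equivariant differential
forms satisfies `b_G² = 0`.  Equivariant `n`-forms `Ω_G^n(A) = O_G ⊗ Ωⁿ(A)` are encoded
componentwise: for each group element `s`, the `s`-component of `b_G` is the operator
`b n s` determined on generators `ω dx` (encoded by `rd n x ω`) by
`b_G(f(s) ⊗ ω dx) = (−1)ⁿ (f(s) ⊗ (ωx − (s⁻¹·x)ω))`.  Here `lm`/`rm` are left/right
multiplication by elements of `A` and `rd n x ω` encodes `ω · dx`, with the usual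
bimodule and Leibniz-type relations of the algebra of noncommutative forms. -/
theorem equivariant_hochschild_boundary_squared_zero
    {A : Type*} [Ring A] {G : Type*} [Group G] [MulSemiringAction G A]
    (Ω : ℕ → Type*) [∀ n, AddCommGroup (Ω n)]
    (lm rm : ∀ n, A → Ω n →ₗ[ℤ] Ω n)
    (rd : ∀ n, A → Ω n →ₗ[ℤ] Ω (n + 1))
    (b : ∀ n, G → Ω (n + 1) →ₗ[ℤ] Ω n)
    (hlm_mul : ∀ (n : ℕ) (a c : A) (ω : Ω n), lm n (a * c) ω = lm n a (lm n c ω))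
    (hrm_mul : ∀ (n : ℕ) (a c : A) (ω : Ω n), rm n (a * c) ω = rm n c (rm n a ω))
    (hlm_rm : ∀ (n : ℕ) (a c : A) (ω : Ω n), lm n a (rm n c ω) = rm n c (lm n a ω))
    (hrm_rd : ∀ (n : ℕ) (x y : A) (ω : Ω n),
      rm (n + 1) y (rd n x ω) = rd n (x * y) ω - rd n y (rm n x ω))
    (hlm_rd : ∀ (n : ℕ) (a x : A) (ω : Ω n),
      lm (n + 1) a (rd n x ω) = rd n x (lm n a ω))
    (hspan : ∀ n : ℕ, (⊤ : Submodule ℤ (Ω (n + 1))) =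
      Submodule.span ℤ {y | ∃ (x : A) (ω : Ω n), y = rd n x ω})
    (hb : ∀ (n : ℕ) (s : G) (x : A) (ω : Ω n),
      b n s (rd n x ω) = ((-1 : ℤ) ^ n) • (rm n x ω - lm n (s⁻¹ • x) ω)) :
    ∀ (n : ℕ) (s : G) (x : Ω (n + 2)), b n s (b (n + 1) s x) = 0 := by
  intro n s x
  have key : ∀ (a : A) (ω : Ω (n + 1)), b n s (b (n + 1) s (rd (n + 1) a ω)) = 0 := by
    intro a ω
    have hω : ω ∈ Submodule.span ℤ {y | ∃ (x : A) (ω : Ω n), y = rd n x ω} := by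
      rw [← hspan n]; trivial
    induction hω using Submodule.span_induction with
    | mem ω hωm =>
        obtain ⟨y, η, rfl⟩ := hωm
        rw [hb, map_smul, map_sub, hrm_rd, hlm_rd, map_sub, hb, hb, hb,
          smul_mul', hrm_mul, hlm_mul, hlm_rm]
        simp only [smul_sub]
        abel
    | zero => simp
    | add ω₁ ω₂ _ _ h1 h2 => rw [map_add, map_add, map_add, h1, h2, add_zero]
    | smul c ω _ h => rw [map_smul, map_smul, map_smul, h, smul_zero]
  have hx : x ∈ Submodule.span ℤ {y | ∃ (a : A) (ω : Ω (n + 1)), y = rd (n + 1) a ω} := by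
    rw [← hspan (n + 1)]; trivial
  induction hx using Submodule.span_induction with
  | mem y hy => obtain ⟨a, ω, rfl⟩ := hy; exact key a ω
  | zero => simp
  | add y z _ _ h1 h2 => rw [map_add, map_add, h1, h2, add_zero]
  | smul c y _ h => rw [map_smul, map_smul, h, smul_zero]
end

section
/- On equivariant n-forms, the equivariant Karoubi operator satisfies κ^{n+1} d = T d, where T is the symmetry operator. -/
section Aux

variable {A : Type*} [Ring A] {G : Type*} [Group G] [MulSemiringAction G A]
variable (Ω : ℕ → Type*) [∀ n, AddCommGroup (Ω n)] [∀ n, DistribMulAction G (Ω n)]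

/-- Cast between components of the graded family `Ω` along an index equality. -/
def castΩ {p q : ℕ} (h : p = q) : Ω p →ₗ[ℤ] Ω q := h ▸ LinearMap.id

lemma castΩ_castΩ {p q : ℕ} (h : p = q) (h' : q = p) (x : Ω p) :
    castΩ Ω h' (castΩ Ω h x) = x := by subst h; rfl

lemma castΩ_inj {p q : ℕ} (h : p = q) {x y : Ω p}
    (hxy : castΩ Ω h x = castΩ Ω h y) : x = y := by subst h; exact hxy

lemma castΩ_rd (rd : ∀ n, A → Ω n →ₗ[ℤ] Ω (n + 1)) {p q : ℕ} (h : p = q)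
    (h' : p + 1 = q + 1) (x : A) (ω : Ω p) :
    castΩ Ω h' (rd p x ω) = rd q x (castΩ Ω h ω) := by subst h; rfl

lemma castΩ_ld (ld : ∀ n, A → Ω n →ₗ[ℤ] Ω (n + 1)) {p q : ℕ} (h : p = q)
    (h' : p + 1 = q + 1) (x : A) (ω : Ω p) :
    castΩ Ω h' (ld p x ω) = ld q x (castΩ Ω h ω) := by subst h; rfl

lemma castΩ_pow_κ (κ : ∀ n, G → Module.End ℤ (Ω n)) {p q : ℕ} (h : p = q)
    (s : G) (j : ℕ) (x : Ω p) :
    ((κ q s) ^ j) (castΩ Ω h x) = castΩ Ω h (((κ p s) ^ j) x) := by subst h; rfl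

lemma castΩ_gsmul {p q : ℕ} (h : p = q) (g : G) (x : Ω p) :
    castΩ Ω h (g • x) = g • castΩ Ω h x := by subst h; rfl

/-- The key rotation lemma, proved by induction on `n`: applying the Karoubi operator
`n+1` times to `Φ (d η)` (where `Φ` is an abstract "left prefix" operator commuting with
`rd`) rotates the whole `d η` block to the front, realized by the abstract "right suffix"
operator `Ψ` commuting with `ld`. -/
theorem key_rotation
    (ι : A →+ Ω 0) (one0 : Ω 0)
    (rd ld : ∀ n, A → Ω n →ₗ[ℤ] Ω (n + 1))
    (d : ∀ n, Ω n →ₗ[ℤ] Ω (n + 1))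
    (κ : ∀ n, G → Module.End ℤ (Ω n))
    (hκ_rd : ∀ (n : ℕ) (s : G) (x : A) (ω : Ω n),
      κ (n + 1) s (rd n x ω) = ((-1 : ℤ) ^ n) • ld n (s⁻¹ • x) ω)
    (hld_rd : ∀ (n : ℕ) (c x : A) (ω : Ω n),
      ld (n + 1) c (rd n x ω) = rd (n + 1) x (ld n c ω))
    (hd_rd : ∀ (n : ℕ) (x : A) (ω : Ω n),
      d (n + 1) (rd n x ω) = rd (n + 1) x (d n ω))
    (hd_ι : ∀ a : A, d 0 (ι a) = rd 0 a one0)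
    (hd_one : d 0 one0 = 0)
    (hspan : ∀ n : ℕ, (⊤ : Submodule ℤ (Ω (n + 1))) =
      Submodule.span ℤ {y | ∃ (x : A) (ω : Ω n), y = rd n x ω})
    (hspan0 : (⊤ : Submodule ℤ (Ω 0)) =
      Submodule.span ℤ (Set.range (⇑ι) ∪ {one0}))
    (hsm_rd : ∀ (n : ℕ) (s : G) (x : A) (ω : Ω n),
      s • rd n x ω = rd n (s • x) (s • ω))
    (hone_inv : ∀ s : G, s • one0 = one0)
    (hldrd0 : ∀ c : A, ld 0 c one0 = rd 0 c one0) :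
    ∀ (n k : ℕ) (s : G) (Φ Ψ : ∀ m, Ω m →ₗ[ℤ] Ω (k + m)),
      (∀ (m : ℕ) (x : A) (ω : Ω m), Φ (m + 1) (rd m x ω) = rd (k + m) x (Φ m ω)) →
      (∀ (m : ℕ) (x : A) (ω : Ω m), Ψ (m + 1) (ld m x ω) = ld (k + m) x (Ψ m ω)) →
      (∀ c : A, ld k c (Φ 0 one0) = Ψ 1 (rd 0 c one0)) →
      ∀ (η : Ω n), ((κ (k + (n + 1)) s) ^ (n + 1)) (Φ (n + 1) (d n η)) =
        ((-1 : ℤ) ^ ((k + n) * (n + 1))) • Ψ (n + 1) (s⁻¹ • d n η) := by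
  intro n
  induction n with
  | zero =>
    intro k s Φ Ψ hΦ hΨ hc η
    have hmem : η ∈ Submodule.span ℤ (Set.range (⇑ι) ∪ {one0}) := by
      rw [← hspan0]; exact Submodule.mem_top
    induction hmem using Submodule.span_induction with
    | mem y hy =>
      rcases hy with hy | hy
      · rcases hy with ⟨a, rfl⟩
        have e1 : Φ 1 (d 0 (ι a)) = rd k a (Φ 0 one0) := by
          rw [hd_ι]; exact hΦ 0 a one0
        have e2 : ((κ (k + 1) s) ^ 1) (Φ 1 (d 0 (ι a)))
            = ((-1 : ℤ) ^ k) • ld k (s⁻¹ • a) (Φ 0 one0) := by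
          rw [pow_one, e1]; exact hκ_rd k s a (Φ 0 one0)
        have e3 : s⁻¹ • d 0 (ι a) = rd 0 (s⁻¹ • a) one0 := by
          rw [hd_ι, hsm_rd 0 s⁻¹ a one0, hone_inv]
        rw [e2, e3, hc (s⁻¹ • a)]
        have hexp : (k + 0) * (0 + 1) = k := by ring
        rw [hexp]
      · simp only [Set.mem_singleton_iff] at hy
        subst hy
        simp [hd_one]
    | zero => simp
    | add y z hy hz hy' hz' =>
      simp only [map_add, smul_add] at *
      rw [hy', hz']
    | smul r y hy hy' =>
      have hcom : s⁻¹ • (r • d 0 y) = r • (s⁻¹ • d 0 y) := smul_comm _ _ _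
      simp only [map_smul, hcom, hy']
      rw [smul_comm]
  | succ n IH =>
    intro k s Φ Ψ hΦ hΨ hc η
    have hmem : η ∈ Submodule.span ℤ {y | ∃ (x : A) (ω : Ω n), y = rd n x ω} := by
      rw [← hspan n]; exact Submodule.mem_top
    induction hmem using Submodule.span_induction with
    | mem y hy =>
      rcases hy with ⟨x, ω, rfl⟩
      -- set up the shifted prefix/suffix operators
      have e : ∀ m, (k + m) + 1 = (k + 1) + m := fun m => by omega
      set c₀ : A := s⁻¹ • x with hc₀
      set Φ' : ∀ m, Ω m →ₗ[ℤ] Ω ((k + 1) + m) :=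
        fun m => (castΩ Ω (e m)) ∘ₗ ((ld (k + m) c₀) ∘ₗ (Φ m)) with hΦ'def
      set Ψ' : ∀ m, Ω m →ₗ[ℤ] Ω ((k + 1) + m) :=
        fun m => (castΩ Ω (e m)) ∘ₗ ((Ψ (m + 1)) ∘ₗ (rd m c₀)) with hΨ'def
      have hΦ'h : ∀ (m : ℕ) (x' : A) (ω' : Ω m),
          Φ' (m + 1) (rd m x' ω') = rd ((k + 1) + m) x' (Φ' m ω') := by
        intro m x' ω'
        show castΩ Ω (e (m + 1)) (ld (k + m + 1) c₀ (Φ (m + 1) (rd m x' ω')))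
          = rd ((k + 1) + m) x' (castΩ Ω (e m) (ld (k + m) c₀ (Φ m ω')))
        rw [hΦ m x' ω', hld_rd (k + m) c₀ x' (Φ m ω')]
        exact castΩ_rd Ω rd (e m) (e (m + 1)) x' (ld (k + m) c₀ (Φ m ω'))
      have hΨ'h : ∀ (m : ℕ) (x' : A) (ω' : Ω m),
          Ψ' (m + 1) (ld m x' ω') = ld ((k + 1) + m) x' (Ψ' m ω') := by
        intro m x' ω'
        show castΩ Ω (e (m + 1)) (Ψ (m + 2) (rd (m + 1) c₀ (ld m x' ω')))
          = ld ((k + 1) + m) x' (castΩ Ω (e m) (Ψ (m + 1) (rd m c₀ ω')))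
        rw [← hld_rd m x' c₀ ω', hΨ (m + 1) x' (rd m c₀ ω')]
        exact castΩ_ld Ω ld (e m) (e (m + 1)) x' (Ψ (m + 1) (rd m c₀ ω'))
      have hc' : ∀ c : A, ld (k + 1) c (Φ' 0 one0) = Ψ' 1 (rd 0 c one0) := by
        intro c
        show ld (k + 1) c (castΩ Ω (e 0) (ld (k + 0) c₀ (Φ 0 one0)))
          = castΩ Ω (e 1) (Ψ 2 (rd 1 c₀ (rd 0 c one0)))
        have h0 : castΩ Ω (e 0) (ld (k + 0) c₀ (Φ 0 one0)) = ld k c₀ (Φ 0 one0) := rfl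
        have h1 : castΩ Ω (e 1) (Ψ 2 (rd 1 c₀ (rd 0 c one0)))
            = Ψ 2 (rd 1 c₀ (rd 0 c one0)) := rfl
        rw [h0, h1, hc c₀, ← hΨ 1 c (rd 0 c₀ one0), hld_rd 0 c c₀ one0, hldrd0 c]
      -- now compute
      have step1 : Φ (n + 2) (d (n + 1) (rd n x ω))
          = rd (k + (n + 1)) x (Φ (n + 1) (d n ω)) := by
        rw [hd_rd n x ω]; exact hΦ (n + 1) x (d n ω)
      have step2 : κ (k + (n + 2)) s (rd (k + (n + 1)) x (Φ (n + 1) (d n ω)))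
          = ((-1 : ℤ) ^ (k + (n + 1))) • ld (k + (n + 1)) c₀ (Φ (n + 1) (d n ω)) :=
        hκ_rd (k + (n + 1)) s x (Φ (n + 1) (d n ω))
      have cast1 : castΩ Ω (e (n + 1)) (ld (k + (n + 1)) c₀ (Φ (n + 1) (d n ω)))
          = Φ' (n + 1) (d n ω) := rfl
      have step3 : ((κ (k + (n + 2)) s) ^ (n + 1))
            (ld (k + (n + 1)) c₀ (Φ (n + 1) (d n ω)))
          = ((-1 : ℤ) ^ (((k + 1) + n) * (n + 1))) •
              Ψ (n + 2) (rd (n + 1) c₀ (s⁻¹ • d n ω)) := by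
        apply castΩ_inj Ω (e (n + 1))
        show castΩ Ω (e (n + 1)) ((κ (k + (n + 1) + 1) s ^ (n + 1))
              (ld (k + (n + 1)) c₀ (Φ (n + 1) (d n ω))))
          = castΩ Ω (e (n + 1)) (((-1 : ℤ) ^ (((k + 1) + n) * (n + 1))) •
              Ψ (n + 2) (rd (n + 1) c₀ (s⁻¹ • d n ω)))
        have hpow := castΩ_pow_κ Ω κ (e (n + 1)) s (n + 1)
          (ld (k + (n + 1)) c₀ (Φ (n + 1) (d n ω)))
        rw [map_smul, ← hpow, cast1]
        have hIH := IH (k + 1) s Φ' Ψ' hΦ'h hΨ'h hc' ω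
        rw [hIH]
        rfl
      have hsmul : s⁻¹ • d (n + 1) (rd n x ω)
          = rd (n + 1) c₀ (s⁻¹ • d n ω) := by
        rw [hd_rd n x ω, hsm_rd (n + 1) s⁻¹ x (d n ω)]
      calc ((κ (k + (n + 2)) s) ^ (n + 2)) (Φ (n + 2) (d (n + 1) (rd n x ω)))
          = ((κ (k + (n + 2)) s) ^ (n + 1))
              (κ (k + (n + 2)) s (Φ (n + 2) (d (n + 1) (rd n x ω)))) := by
            rw [pow_succ, Module.End.mul_apply]
        _ = ((-1 : ℤ) ^ (k + (n + 1))) • ((κ (k + (n + 2)) s) ^ (n + 1))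
              (ld (k + (n + 1)) c₀ (Φ (n + 1) (d n ω))) := by
            rw [step1, step2, map_smul]
        _ = ((-1 : ℤ) ^ (k + (n + 1))) • (((-1 : ℤ) ^ (((k + 1) + n) * (n + 1))) •
              Ψ (n + 2) (rd (n + 1) c₀ (s⁻¹ • d n ω))) := by rw [step3]
        _ = ((-1 : ℤ) ^ ((k + (n + 1)) * (n + 2))) •
              Ψ (n + 2) (s⁻¹ • d (n + 1) (rd n x ω)) := by
            rw [hsmul, smul_smul, ← pow_add]
            congr 2
            ring
    | zero => simp
    | add y z hy hz hy' hz' =>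
      simp only [map_add, smul_add] at *
      rw [hy', hz']
    | smul r y hy hy' =>
      have hcom : s⁻¹ • (r • d (n + 1) y) = r • (s⁻¹ • d (n + 1) y) := smul_comm _ _ _
      simp only [map_smul, hcom, hy']
      rw [smul_comm]

end Aux

/-- On equivariant `n`-forms, the equivariant Karoubi operator satisfies
`κ^{n+1} d = T d`, where `T` is the symmetry operator.  Equivariant forms
`Ω_G^n(A) = O_G ⊗ Ωⁿ(A)` are encoded componentwise (one component for each group
element `s`, carrying the `G`-action); `rd n x ω` encodes `ω · dx`, `ld n x ω` encodes
`(dx) · ω`, `lm`/`rm` are left/right multiplication by `A`, `ι`/`one0` encode `A⁺ ⊆ Ω⁰`.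
The `s`-component of the Karoubi operator is `κ = id − (b d + d b)`, with the explicit
formulas `κ(f(s) ⊗ ω dx) = (−1)^{n−1} f(s) ⊗ (s⁻¹·dx) ω` and
`κ(f(s) ⊗ x) = f(s) ⊗ s⁻¹·x`; the `s`-component of `T` is `ω ↦ s⁻¹ • ω`. -/
theorem equivariant_karoubi_pow_succ_comp_d_eq_T_comp_d
    {A : Type*} [Ring A] {G : Type*} [Group G] [MulSemiringAction G A]
    (Ω : ℕ → Type*) [∀ n, AddCommGroup (Ω n)] [∀ n, DistribMulAction G (Ω n)]
    (ι : A →+ Ω 0) (one0 : Ω 0)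
    (lm rm : ∀ n, A → Ω n →ₗ[ℤ] Ω n)
    (rd ld : ∀ n, A → Ω n →ₗ[ℤ] Ω (n + 1))
    (d : ∀ n, Ω n →ₗ[ℤ] Ω (n + 1))
    (b : ∀ n, G → Ω (n + 1) →ₗ[ℤ] Ω n)
    (κ : ∀ n, G → Module.End ℤ (Ω n))
    (hκ0 : ∀ s : G, κ 0 s = 1 - (b 0 s ∘ₗ d 0))
    (hκsucc : ∀ (n : ℕ) (s : G),
      κ (n + 1) s = 1 - ((b (n + 1) s ∘ₗ d (n + 1)) + (d n ∘ₗ b n s)))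
    (hκ_rd : ∀ (n : ℕ) (s : G) (x : A) (ω : Ω n),
      κ (n + 1) s (rd n x ω) = ((-1 : ℤ) ^ n) • ld n (s⁻¹ • x) ω)
    (hκ_zero : ∀ (s : G) (x : Ω 0), κ 0 s x = s⁻¹ • x)
    (hb : ∀ (n : ℕ) (s : G) (x : A) (ω : Ω n),
      b n s (rd n x ω) = ((-1 : ℤ) ^ n) • (rm n x ω - lm n (s⁻¹ • x) ω))
    (hld_rd : ∀ (n : ℕ) (c x : A) (ω : Ω n),
      ld (n + 1) c (rd n x ω) = rd (n + 1) x (ld n c ω))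
    (hd_rd : ∀ (n : ℕ) (x : A) (ω : Ω n),
      d (n + 1) (rd n x ω) = rd (n + 1) x (d n ω))
    (hd_ι : ∀ a : A, d 0 (ι a) = rd 0 a one0)
    (hd_one : d 0 one0 = 0)
    (hspan : ∀ n : ℕ, (⊤ : Submodule ℤ (Ω (n + 1))) =
      Submodule.span ℤ {y | ∃ (x : A) (ω : Ω n), y = rd n x ω})
    (hspan0 : (⊤ : Submodule ℤ (Ω 0)) =
      Submodule.span ℤ (Set.range (⇑ι) ∪ {one0}))
    (hsm_rd : ∀ (n : ℕ) (s : G) (x : A) (ω : Ω n),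
      s • rd n x ω = rd n (s • x) (s • ω))
    (hsm_ld : ∀ (n : ℕ) (s : G) (x : A) (ω : Ω n),
      s • ld n x ω = ld n (s • x) (s • ω)) :
    ∀ (n : ℕ) (s : G) (x : Ω n),
      ((κ (n + 1) s) ^ (n + 1)) (d n x) = s⁻¹ • d n x := by
  -- derived fact: `one0` is invariant
  have hone_inv : ∀ s : G, s • one0 = one0 := by
    have h1 : ∀ s : G, s⁻¹ • one0 = one0 := by
      intro s
      have h := hκ_zero s one0
      rw [hκ0 s] at h
      simpa [hd_one] using h.symm
    intro s
    have := h1 s⁻¹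
    rwa [inv_inv] at this
  -- derived fact: `b 0 1` kills exact forms
  have hb1 : ∀ x : Ω 0, b 0 (1 : G) (d 0 x) = 0 := by
    intro x
    have h := hκ_zero (1 : G) x
    rw [hκ0 1] at h
    simp only [LinearMap.sub_apply, Module.End.one_apply, LinearMap.coe_comp,
      Function.comp_apply, inv_one, one_smul] at h
    have h2 : x - b 0 1 (d 0 x) = x := h
    exact sub_eq_self.mp h2
  -- derived fact: `ld 0 c one0 = rd 0 c one0`
  have hldrd0 : ∀ c : A, ld 0 c one0 = rd 0 c one0 := by
    intro c
    have h2 := hκ_rd 0 1 c one0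
    simp only [pow_zero, one_smul, inv_one] at h2
    have h3 : κ 1 (1 : G) (rd 0 c one0) = rd 0 c one0 := by
      rw [hκsucc 0 1]
      have hd1 : d 1 (rd 0 c one0) = 0 := by
        rw [hd_rd 0 c one0, hd_one, map_zero]
      have hb0 : b 0 (1 : G) (rd 0 c one0) = 0 := by
        rw [← hd_ι c]; exact hb1 (ι c)
      simp [LinearMap.sub_apply, LinearMap.add_apply, hd1, hb0]
    rw [h3] at h2
    exact h2.symm
  intro n s x
  -- apply the key rotation lemma with trivial prefix/suffix
  have hkey := key_rotation Ω ι one0 rd ld d κ hκ_rd hld_rd hd_rd hd_ι hd_one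
    hspan hspan0 hsm_rd hone_inv hldrd0 n 0 s
    (fun m => castΩ Ω (Nat.zero_add m).symm) (fun m => castΩ Ω (Nat.zero_add m).symm)
    (fun m x' ω' => castΩ_rd Ω rd (Nat.zero_add m).symm (Nat.zero_add (m + 1)).symm x' ω')
    (fun m x' ω' => castΩ_ld Ω ld (Nat.zero_add m).symm (Nat.zero_add (m + 1)).symm x' ω')
    (fun c => hldrd0 c) x
  have h := castΩ_inj Ω ((Nat.zero_add (n + 1)).symm) (x := ((κ (n + 1) s) ^ (n + 1)) (d n x))
    (y := s⁻¹ • d n x) ?_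
  · exact h
  · rw [← castΩ_pow_κ Ω κ ((Nat.zero_add (n + 1)).symm) s (n + 1) (d n x)]
    rw [hkey]
    have heven : Even ((0 + n) * (n + 1)) := by
      rw [Nat.zero_add]
      exact Nat.even_mul_succ_self n
    rw [heven.neg_one_pow, one_smul]
end

section
/- The space of equivariant differential forms Ω_G(A) with operators b_G and B_G = Σ_{j=0}^{n} κ_G^j d on n-forms is a paramixed complex: b_G² = 0, B_G² = 0, and B_G b_G + b_G B_G = id − T. -/
/-- The space of equivariant differential forms `Ω_G(A)` with the equivariant
Hochschild operator `b_G` and the equivariant Connes operator `B_G = Σ_{j=0}^{n} κ_G^j d`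
on `n`-forms is a paramixed complex: `b_G² = 0`, `B_G² = 0` and
`B_G b_G + b_G B_G = id − T`.  Equivariant forms are encoded componentwise (one component
for each group element `s`); the `s`-component of `T` is `ω ↦ s⁻¹ • ω`.  The identities
`κⁿ = T + bκⁿd` and `κ^{n+1}d = Td` on `n`-forms may be used (hypotheses `hkTbkd`,
`hkd_Td`). -/
theorem equivariant_forms_paramixed_complex
    {A : Type*} [Ring A] {G : Type*} [Group G] [MulSemiringAction G A]
    (Ω : ℕ → Type*) [∀ n, AddCommGroup (Ω n)] [∀ n, DistribMulAction G (Ω n)]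
    (lm rm : ∀ n, A → Ω n →ₗ[ℤ] Ω n)
    (rd : ∀ n, A → Ω n →ₗ[ℤ] Ω (n + 1))
    (d : ∀ n, Ω n →ₗ[ℤ] Ω (n + 1))
    (b : ∀ n, G → Ω (n + 1) →ₗ[ℤ] Ω n)
    (κ : ∀ n, G → Module.End ℤ (Ω n))
    (hκ0 : ∀ s : G, κ 0 s = 1 - (b 0 s ∘ₗ d 0))
    (hκsucc : ∀ (n : ℕ) (s : G),
      κ (n + 1) s = 1 - ((b (n + 1) s ∘ₗ d (n + 1)) + (d n ∘ₗ b n s)))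
    (hb : ∀ (n : ℕ) (s : G) (x : A) (ω : Ω n),
      b n s (rd n x ω) = ((-1 : ℤ) ^ n) • (rm n x ω - lm n (s⁻¹ • x) ω))
    (hlm_mul : ∀ (n : ℕ) (a c : A) (ω : Ω n), lm n (a * c) ω = lm n a (lm n c ω))
    (hrm_mul : ∀ (n : ℕ) (a c : A) (ω : Ω n), rm n (a * c) ω = rm n c (rm n a ω))
    (hlm_rm : ∀ (n : ℕ) (a c : A) (ω : Ω n), lm n a (rm n c ω) = rm n c (lm n a ω))
    (hrm_rd : ∀ (n : ℕ) (x y : A) (ω : Ω n),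
      rm (n + 1) y (rd n x ω) = rd n (x * y) ω - rd n y (rm n x ω))
    (hlm_rd : ∀ (n : ℕ) (a x : A) (ω : Ω n),
      lm (n + 1) a (rd n x ω) = rd n x (lm n a ω))
    (hspan : ∀ n : ℕ, (⊤ : Submodule ℤ (Ω (n + 1))) =
      Submodule.span ℤ {y | ∃ (x : A) (ω : Ω n), y = rd n x ω})
    (hdd : ∀ (n : ℕ) (x : Ω n), d (n + 1) (d n x) = 0)
    (hkd : ∀ (n : ℕ) (s : G) (x : Ω n), κ (n + 1) s (d n x) = d n (κ n s x))
    (hTd : ∀ (n : ℕ) (s : G) (x : Ω n), d n (s⁻¹ • x) = s⁻¹ • d n x)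
    (hTb : ∀ (n : ℕ) (s : G) (x : Ω (n + 1)), b n s (s⁻¹ • x) = s⁻¹ • b n s x)
    (hkTbkd : ∀ (n : ℕ) (s : G) (x : Ω n),
      ((κ n s) ^ n) x = s⁻¹ • x + b n s (((κ (n + 1) s) ^ n) (d n x)))
    (hkd_Td : ∀ (n : ℕ) (s : G) (x : Ω n),
      ((κ (n + 1) s) ^ (n + 1)) (d n x) = s⁻¹ • d n x) :
    -- b_G² = 0:
    (∀ (n : ℕ) (s : G) (x : Ω (n + 2)), b n s (b (n + 1) s x) = 0) ∧
    -- B_G² = 0: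
    (∀ (n : ℕ) (s : G) (x : Ω n),
      (∑ j ∈ Finset.range (n + 2), (κ (n + 2) s) ^ j)
          (d (n + 1) ((∑ j ∈ Finset.range (n + 1), (κ (n + 1) s) ^ j) (d n x))) = 0) ∧
    -- B_G b_G + b_G B_G = id − T, in degree 0:
    (∀ (s : G) (x : Ω 0),
      b 0 s ((∑ j ∈ Finset.range 1, (κ 1 s) ^ j) (d 0 x)) = x - s⁻¹ • x) ∧
    -- B_G b_G + b_G B_G = id − T, in positive degrees:
    (∀ (n : ℕ) (s : G) (x : Ω (n + 1)),
      b (n + 1) s ((∑ j ∈ Finset.range (n + 2), (κ (n + 2) s) ^ j) (d (n + 1) x))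
        + (∑ j ∈ Finset.range (n + 1), (κ (n + 1) s) ^ j) (d n (b n s x))
        = x - s⁻¹ • x) := by
  -- b² = 0
  have bb : ∀ (n : ℕ) (s : G) (x : Ω (n + 2)), b n s (b (n + 1) s x) = 0 := by
    intro n s x
    have hx : x ∈ Submodule.span ℤ {y | ∃ (a : A) (ω : Ω (n+1)), y = rd (n+1) a ω} := by
      rw [← hspan]; trivial
    induction hx using Submodule.span_induction with
    | mem y hy =>
      obtain ⟨a, ω, rfl⟩ := hy
      have hω : ω ∈ Submodule.span ℤ {y | ∃ (c : A) (ω' : Ω n), y = rd n c ω'} := by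
        rw [← hspan]; trivial
      induction hω using Submodule.span_induction with
      | mem z hz =>
        obtain ⟨c, ω', rfl⟩ := hz
        rw [hb, map_zsmul, map_sub, hrm_rd, hlm_rd, map_sub, hb, hb, hb,
          smul_mul', hrm_mul, hlm_mul, hlm_rm]
        module
      | zero => simp
      | add z w _ _ hz hw => rw [map_add, map_add, map_add, hz, hw, add_zero]
      | smul t z _ hz => rw [map_smul, map_smul, map_smul, hz, smul_zero]
    | zero => simp
    | add y z _ _ hy hz => rw [map_add, map_add, hy, hz, add_zero]
    | smul t y _ hy => rw [map_smul, map_smul, hy, smul_zero]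
  -- d commutes with powers of κ
  have dκ : ∀ (n : ℕ) (s : G) (j : ℕ) (x : Ω n),
      d n ((κ n s ^ j) x) = ((κ (n+1) s) ^ j) (d n x) := by
    intro n s j
    induction j with
    | zero => intro x; simp
    | succ j ih =>
      intro x
      rw [pow_succ', pow_succ', Module.End.mul_apply, Module.End.mul_apply,
        ← hkd, ih x]
  -- b commutes with powers of κ
  have bκ : ∀ (n : ℕ) (s : G) (y : Ω (n+2)),
      b (n+1) s (κ (n+2) s y) = κ (n+1) s (b (n+1) s y) := by
    intro n s y
    rw [hκsucc (n+1) s, hκsucc n s]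
    simp only [LinearMap.sub_apply, LinearMap.add_apply, LinearMap.comp_apply,
      Module.End.one_apply, map_sub, map_add]
    rw [bb, bb, map_zero]
    abel
  have bκpow : ∀ (n : ℕ) (s : G) (j : ℕ) (y : Ω (n+2)),
      b (n+1) s (((κ (n+2) s) ^ j) y) = ((κ (n+1) s) ^ j) (b (n+1) s y) := by
    intro n s j
    induction j with
    | zero => intro y; simp
    | succ j ih =>
      intro y
      rw [pow_succ', pow_succ', Module.End.mul_apply, Module.End.mul_apply,
        bκ, ih y]
  refine ⟨bb, ?_, ?_, ?_⟩
  · -- B² = 0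
    intro n s x
    have h0 : d (n+1) ((∑ j ∈ Finset.range (n + 1), (κ (n + 1) s) ^ j) (d n x)) = 0 := by
      rw [LinearMap.sum_apply, map_sum]
      refine Finset.sum_eq_zero fun j _ => ?_
      rw [dκ, hdd, map_zero]
    rw [h0, map_zero]
  · -- degree 0
    intro s x
    have h := hkTbkd 0 s x
    simp only [pow_zero, Module.End.one_apply] at h
    simp only [Finset.sum_range_one, pow_zero, Module.End.one_apply]
    exact eq_sub_iff_add_eq'.mpr h.symm
  · -- positive degrees
    intro n s x
    have key := hκsucc n s
    have hbd : b (n+1) s (d (n+1) x) + d n (b n s x) = x - κ (n+1) s x := by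
      rw [key]
      simp only [LinearMap.sub_apply, LinearMap.add_apply, LinearMap.comp_apply,
        Module.End.one_apply]
      abel
    -- expand the sums
    rw [LinearMap.sum_apply, map_sum, LinearMap.sum_apply]
    have e1 : ∀ j, b (n+1) s (((κ (n+2) s) ^ j) (d (n+1) x))
        = ((κ (n+1) s) ^ j) (b (n+1) s (d (n+1) x)) := fun j => bκpow n s j _
    simp only [e1]
    rw [Finset.sum_range_succ, add_right_comm, ← Finset.sum_add_distrib]
    have e2 : ∀ j, ((κ (n+1) s) ^ j) (b (n+1) s (d (n+1) x))
        + ((κ (n+1) s) ^ j) (d n (b n s x))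
        = ((κ (n+1) s) ^ j) x - ((κ (n+1) s) ^ (j+1)) x := by
      intro j
      rw [← map_add, hbd, map_sub, pow_succ, Module.End.mul_apply]
    simp only [e2]
    rw [Finset.sum_range_sub' (fun j => ((κ (n+1) s) ^ j) x)]
    have h := hkTbkd (n+1) s x
    rw [bκpow n s (n+1) (d (n+1) x)] at h
    simp only [pow_zero, Module.End.one_apply]
    rw [h]
    abel
end

section
/- Given a deformation retraction (i, p, h) of a chain complex (C, b) onto (D, b) with pi = id and ip = id + (bh + hb), the operators k = (bh+hb)h(bh+hb) and then l = −kbk yield a special deformation retraction: li = 0, pl = 0, bl + lb = ip − id, and l² = 0. -/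
/-- The operator `k = (bh + hb) h (bh + hb)` built from a deformation retraction. -/
noncomputable def kOp {C : Type*} [AddCommGroup C] [Module ℂ C]
    (bC h : Module.End ℂ C) : Module.End ℂ C :=
  (bC * h + h * bC) * h * (bC * h + h * bC)

/-- The operator `l = −k b k`. -/
noncomputable def lOp {C : Type*} [AddCommGroup C] [Module ℂ C]
    (bC h : Module.End ℂ C) : Module.End ℂ C :=
  -(kOp bC h * bC * kOp bC h)

/-- Given a deformation retraction `(i, p, h)` of a chain complex `(C, b)`
onto `(D, b)` with `p i = id` and `i p = id + (bh + hb)`, the operators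
`k = (bh + hb) h (bh + hb)` and then `l = −k b k` yield a special deformation retraction:
`l i = 0`, `p l = 0`, `b l + l b = i p − id`, and `l² = 0`. -/
theorem special_deformation_retraction_from_deformation_retraction
    {C D : Type*} [AddCommGroup C] [Module ℂ C] [AddCommGroup D] [Module ℂ D]
    (bC : Module.End ℂ C) (bD : Module.End ℂ D)
    (i : D →ₗ[ℂ] C) (p : C →ₗ[ℂ] D) (h : Module.End ℂ C)
    (hbC2 : bC * bC = 0) (hbD2 : bD * bD = 0)
    (hi : bC ∘ₗ i = i ∘ₗ bD) (hp : bD ∘ₗ p = p ∘ₗ bC)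
    (hpi : p ∘ₗ i = LinearMap.id)
    (hip : i ∘ₗ p = (1 : Module.End ℂ C) + (bC * h + h * bC)) :
    lOp bC h ∘ₗ i = 0 ∧
    p ∘ₗ lOp bC h = 0 ∧
    bC * lOp bC h + lOp bC h * bC = i ∘ₗ p - 1 ∧
    lOp bC h * lOp bC h = 0 := by
  set e : Module.End ℂ C := bC * h + h * bC with he
  set k : Module.End ℂ C := kOp bC h with hk
  have hkdef : k = e * h * e := rfl
  -- e² = -e
  have hipip : (i ∘ₗ p) * (i ∘ₗ p) = i ∘ₗ p := by
    show (i ∘ₗ p) ∘ₗ (i ∘ₗ p) = i ∘ₗ p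
    rw [LinearMap.comp_assoc, ← LinearMap.comp_assoc p i p, hpi, LinearMap.id_comp]
  have h2 : (1 + e) * (1 + e) = 1 + e := by rw [← hip]; exact hipip
  have he2 : e * e = -e := by linear_combination (norm := noncomm_ring) h2
  -- e commutes with bC
  have hbe : bC * e = e * bC := by
    have : bC * e - e * bC = bC * bC * h - h * (bC * bC) := by
      rw [he]; noncomm_ring
    rw [hbC2] at this
    simp at this
    linear_combination (norm := noncomm_ring) this
  -- e * bC = bC * h * bC
  have hebc : e * bC = bC * h * bC := by
    have : e * bC = bC * h * bC + h * (bC * bC) := by rw [he]; noncomm_ring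
    rw [hbC2] at this; simpa using this
  have hke : k * e = -k := by
    rw [hkdef]
    calc e * h * e * e = e * h * (e * e) := by noncomm_ring
    _ = -(e * h * e) := by rw [he2]; noncomm_ring
  have hek : e * k = -k := by
    rw [hkdef]
    calc e * (e * h * e) = (e * e) * (h * e) := by noncomm_ring
    _ = -(e * h * e) := by rw [he2]; noncomm_ring
  -- bC k + k bC = e
  have hbk : bC * k + k * bC = e := by
    have h1 : bC * k + k * bC = e * (bC * h + h * bC) * e := by
      rw [hkdef]
      calc bC * (e * h * e) + e * h * e * bC
          = (bC * e) * h * e + e * h * (e * bC) := by noncomm_ring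
        _ = (e * bC) * h * e + e * h * (bC * e) := by rw [hbe]
        _ = e * (bC * h + h * bC) * e := by noncomm_ring
    rw [h1, ← he]
    calc e * e * e = (e * e) * e := by noncomm_ring
    _ = -e * e := by rw [he2]
    _ = -(e*e) := by noncomm_ring
    _ = e := by rw [he2, neg_neg]
  -- bC k bC = e bC
  have hbkb : bC * k * bC = e * bC := by
    calc bC * k * bC = (bC * e) * h * (e * bC) := by rw [hkdef]; noncomm_ring
    _ = (e * bC) * h * (bC * e) := by rw [hbe]
    _ = e * (bC * h * bC) * e := by noncomm_ring
    _ = e * (e * bC) * e := by rw [hebc]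
    _ = (e * e) * (bC * e) := by noncomm_ring
    _ = (-e) * (e * bC) := by rw [he2, hbe]
    _ = -((e * e) * bC) := by noncomm_ring
    _ = -((-e) * bC) := by rw [he2]
    _ = e * bC := by noncomm_ring
  -- (bC k)(k bC) = 0
  have hkey : bC * k * (k * bC) = 0 := by
    have hbk' : bC * k = e - k * bC := by linear_combination (norm := noncomm_ring) hbk
    calc bC * k * (k * bC) = (e - k * bC) * (k * bC) := by rw [hbk']
    _ = (e * k) * bC - k * (bC * k * bC) := by noncomm_ring
    _ = (-k) * bC - k * (e * bC) := by rw [hek, hbkb]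
    _ = -(k * bC) - (k * e) * bC := by noncomm_ring
    _ = -(k * bC) - (-k) * bC := by rw [hke]
    _ = 0 := by noncomm_ring
  -- homotopy: bC l + l bC = e
  have hbl : bC * lOp bC h + lOp bC h * bC = e := by
    have hl : lOp bC h = -(k * bC * k) := rfl
    rw [hl]
    calc bC * -(k * bC * k) + -(k * bC * k) * bC
        = -((bC * k * bC) * k) - k * (bC * k * bC) := by noncomm_ring
      _ = -((e * bC) * k) - k * (e * bC) := by rw [hbkb]
      _ = -(bC * (e * k)) - (k * e) * bC := by nth_rewrite 1 [← hbe]; noncomm_ring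
      _ = -(bC * (-k)) - (-k) * bC := by rw [hek, hke]
      _ = bC * k + k * bC := by noncomm_ring
      _ = e := hbk
  -- e ∘ i = 0  and  p ∘ e = 0
  have hei : e ∘ₗ i = 0 := by
    have h1 : (i ∘ₗ p) ∘ₗ i = i := by
      rw [LinearMap.comp_assoc, hpi, LinearMap.comp_id]
    rw [hip] at h1
    have h2 : i + e ∘ₗ i = i := by
      have : ((1 : Module.End ℂ C) + e) ∘ₗ i = (1 : Module.End ℂ C) ∘ₗ i + e ∘ₗ i := by
        ext x; simp
      rw [this] at h1
      simpa [Module.End.one_eq_id] using h1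
    rwa [add_eq_left] at h2
  have hpe : p ∘ₗ e = 0 := by
    have h1 : p ∘ₗ (i ∘ₗ p) = p := by
      rw [← LinearMap.comp_assoc, hpi, LinearMap.id_comp]
    rw [hip] at h1
    have h2 : p + p ∘ₗ e = p := by
      have : p ∘ₗ ((1 : Module.End ℂ C) + e) = p ∘ₗ (1 : Module.End ℂ C) + p ∘ₗ e := by
        ext x; simp
      rw [this] at h1
      simpa [Module.End.one_eq_id] using h1
    rwa [add_eq_left] at h2
  have hki : k ∘ₗ i = 0 := by
    have : k ∘ₗ i = (e * h) ∘ₗ (e ∘ₗ i) := by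
      rw [hkdef, Module.End.mul_eq_comp (e * h) e, LinearMap.comp_assoc]
    rw [this, hei, LinearMap.comp_zero]
  have hpk : p ∘ₗ k = 0 := by
    have : p ∘ₗ k = (p ∘ₗ e) ∘ₗ (h * e) := by
      rw [hkdef, mul_assoc, Module.End.mul_eq_comp e (h * e), LinearMap.comp_assoc]
    rw [this, hpe, LinearMap.zero_comp]
  refine ⟨?_, ?_, ?_, ?_⟩
  · have : lOp bC h ∘ₗ i = -((k * bC) ∘ₗ (k ∘ₗ i)) := by
      show (-(k * bC * k)) ∘ₗ i = _
      rw [LinearMap.neg_comp, Module.End.mul_eq_comp (k * bC) k, LinearMap.comp_assoc]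
    rw [this, hki, LinearMap.comp_zero, neg_zero]
  · have : p ∘ₗ lOp bC h = -((p ∘ₗ k) ∘ₗ (bC * k)) := by
      show p ∘ₗ (-(k * bC * k)) = _
      rw [LinearMap.comp_neg, mul_assoc, Module.End.mul_eq_comp k (bC * k),
        ← LinearMap.comp_assoc]
    rw [this, hpk]; simp
  · rw [hbl, hip]; abel
  · show -(k * bC * k) * -(k * bC * k) = 0
    calc -(k * bC * k) * -(k * bC * k) = k * (bC * k * (k * bC)) * k := by noncomm_ring
    _ = 0 := by rw [hkey]; noncomm_ring
end

section
/- Let l be a special deformation retraction of a paracomplex C onto D (with b-chain maps i, p satisfying pi = id, ip = id + bl + lb, li = 0, pl = 0, l² = 0, and p also a B-chain map, where b² = B² = 0 and bB + Bb = id − T with T commuting with i, l). Then for all j > 0: [(lB)^j i, b] = −[(lB)^{j−1} i, B]. -/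
/-- Let `l` be a special deformation retraction of a paracomplex `C` onto
`D` (with `b`-chain maps `i`, `p` satisfying `p i = id`, `i p = id + bl + lb`, `l i = 0`,
`p l = 0`, `l² = 0`, and `p` also a `B`-chain map, where `b² = B² = 0` and
`bB + Bb = id − T` with the symmetry `T` commuting with all the maps involved, in
particular `l (id − T) i = 0`).  Then for all `j > 0`:
`[(lB)^j i, b] = −[(lB)^{j−1} i, B]`, where `[X, b] = X b_D − b_C X` for
a map `X : D → C`. -/
theorem special_retraction_commutator_lB_pow_i_b
    {C D : Type*} [AddCommGroup C] [Module ℂ C] [AddCommGroup D] [Module ℂ D]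
    (bC BC TC : Module.End ℂ C) (bD BD TD : Module.End ℂ D)
    (i : D →ₗ[ℂ] C) (p : C →ₗ[ℂ] D) (l : Module.End ℂ C)
    (hbC2 : bC * bC = 0) (hBC2 : BC * BC = 0)
    (hbD2 : bD * bD = 0) (hBD2 : BD * BD = 0)
    (hTC : bC * BC + BC * bC = 1 - TC)
    (hTD : bD * BD + BD * bD = 1 - TD)
    (hib : bC ∘ₗ i = i ∘ₗ bD)
    (hpb : bD ∘ₗ p = p ∘ₗ bC)
    (hpB : BD ∘ₗ p = p ∘ₗ BC)
    (hpi : p ∘ₗ i = LinearMap.id)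
    (hip : i ∘ₗ p = (1 : Module.End ℂ C) + (bC * l + l * bC))
    (hli : l ∘ₗ i = 0) (hpl : p ∘ₗ l = 0) (hll : l * l = 0)
    (hTi : TC ∘ₗ i = i ∘ₗ TD) (hTp : TD ∘ₗ p = p ∘ₗ TC)
    (hTl : TC * l = l * TC) (hTb : TC * bC = bC * TC) (hTB : TC * BC = BC * TC)
    (hlTi : ((1 - TC) * l) ∘ₗ i = 0 ∧ (l * (1 - TC)) ∘ₗ i = 0) :
    ∀ m : ℕ,
      ((((l * BC) ^ (m + 1)) ∘ₗ i) ∘ₗ bD) - (bC ∘ₗ (((l * BC) ^ (m + 1)) ∘ₗ i))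
        = -(((((l * BC) ^ m) ∘ₗ i) ∘ₗ BD) - (BC ∘ₗ (((l * BC) ^ m) ∘ₗ i))) := by
  have hlb : l * bC = (i ∘ₗ p : Module.End ℂ C) - 1 - bC * l := by
    rw [hip]; abel
  have h2 : BC * bC = 1 - TC - bC * BC := by rw [← hTC]; abel
  have hkey : l * BC * bC
      = l - l * TC - (i ∘ₗ p : Module.End ℂ C) * BC + BC + bC * (l * BC) := by
    calc l * BC * bC = l * (BC * bC) := by rw [mul_assoc]
      _ = l * (1 - TC - bC * BC) := by rw [h2]
      _ = l - l * TC - (l * bC) * BC := by noncomm_ring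
      _ = l - l * TC - ((i ∘ₗ p : Module.End ℂ C) - 1 - bC * l) * BC := by rw [hlb]
      _ = l - l * TC - (i ∘ₗ p : Module.End ℂ C) * BC + BC + bC * (l * BC) := by
          noncomm_ring
  have main : ∀ F : D →ₗ[ℂ] C, l ∘ₗ F = 0 →
      (l * BC) ∘ₗ (bC ∘ₗ F)
        = BC ∘ₗ F + bC ∘ₗ ((l * BC) ∘ₗ F) - i ∘ₗ (BD ∘ₗ (p ∘ₗ F)) := by
    intro F hF
    have e1 : (l * BC) ∘ₗ (bC ∘ₗ F) = (l * BC * bC) ∘ₗ F := by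
      simp only [Module.End.mul_eq_comp, LinearMap.comp_assoc]
    rw [e1, hkey]
    simp only [LinearMap.add_comp, LinearMap.sub_comp]
    have t1 : (l * TC) ∘ₗ F = 0 := by
      rw [← hTl, Module.End.mul_eq_comp, LinearMap.comp_assoc, hF, LinearMap.comp_zero]
    have t2 : ((i ∘ₗ p : Module.End ℂ C) * BC) ∘ₗ F = i ∘ₗ (BD ∘ₗ (p ∘ₗ F)) := by
      simp only [Module.End.mul_eq_comp, LinearMap.comp_assoc]
      rw [← LinearMap.comp_assoc F BC p, ← hpB, LinearMap.comp_assoc]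
    have t3 : (bC * (l * BC)) ∘ₗ F = bC ∘ₗ ((l * BC) ∘ₗ F) := by
      simp only [Module.End.mul_eq_comp, LinearMap.comp_assoc]
    rw [hF, t1, t2, t3]
    abel
  intro m
  induction m with
  | zero =>
    have e : (((l * BC) ^ (0 + 1)) ∘ₗ i) ∘ₗ bD = (l * BC) ∘ₗ (bC ∘ₗ i) := by
      rw [pow_one, LinearMap.comp_assoc, ← hib]
    rw [e, main i hli, hpi]
    simp only [zero_add, pow_zero, pow_one, Module.End.one_eq_id, LinearMap.id_comp,
      LinearMap.comp_id]
    abel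
  | succ m ih =>
    have ih' : (((l * BC) ^ (m + 1)) ∘ₗ i) ∘ₗ bD
        = bC ∘ₗ (((l * BC) ^ (m + 1)) ∘ₗ i)
          - (((l * BC) ^ m) ∘ₗ i) ∘ₗ BD + BC ∘ₗ (((l * BC) ^ m) ∘ₗ i) := by
      rw [sub_eq_iff_eq_add] at ih
      rw [ih]; abel
    have hF0 : l ∘ₗ (((l * BC) ^ (m + 1)) ∘ₗ i) = 0 := by
      have hz : l * (l * BC) ^ (m + 1) = 0 := by
        rw [pow_succ' (l * BC) m, ← mul_assoc, ← mul_assoc, hll, zero_mul, zero_mul]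
      rw [← LinearMap.comp_assoc, ← Module.End.mul_eq_comp, hz, LinearMap.zero_comp]
    have hpF : p ∘ₗ (((l * BC) ^ (m + 1)) ∘ₗ i) = 0 := by
      rw [pow_succ' (l * BC) m, Module.End.mul_eq_comp, Module.End.mul_eq_comp]
      simp only [LinearMap.comp_assoc]
      rw [← LinearMap.comp_assoc _ l p, hpl, LinearMap.zero_comp]
    have e2 : (((l * BC) ^ (m + 1 + 1)) ∘ₗ i) ∘ₗ bD
        = (l * BC) ∘ₗ ((((l * BC) ^ (m + 1)) ∘ₗ i) ∘ₗ bD) := by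
      rw [pow_succ' (l * BC) (m + 1), Module.End.mul_eq_comp]
      simp only [LinearMap.comp_assoc]
    have eA : (l * BC) ∘ₗ ((((l * BC) ^ m) ∘ₗ i) ∘ₗ BD)
        = (((l * BC) ^ (m + 1)) ∘ₗ i) ∘ₗ BD := by
      rw [pow_succ' (l * BC) m]
      simp only [Module.End.mul_eq_comp, LinearMap.comp_assoc]
    have eB : (l * BC) ∘ₗ (BC ∘ₗ (((l * BC) ^ m) ∘ₗ i)) = 0 := by
      have hz : (l * BC) * BC = 0 := by rw [mul_assoc, hBC2, mul_zero]
      rw [← LinearMap.comp_assoc, ← Module.End.mul_eq_comp, hz, LinearMap.zero_comp]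
    have eD : bC ∘ₗ ((l * BC) ∘ₗ (((l * BC) ^ (m + 1)) ∘ₗ i))
        = bC ∘ₗ (((l * BC) ^ (m + 1 + 1)) ∘ₗ i) := by
      rw [pow_succ' (l * BC) (m + 1)]
      simp only [Module.End.mul_eq_comp, LinearMap.comp_assoc]
    rw [e2, ih']
    simp only [LinearMap.comp_sub, LinearMap.comp_add]
    rw [main _ hF0, hpF, eA, eB, eD]
    simp only [LinearMap.comp_zero]
    abel
end

section
/- Let l be a special deformation retraction as above. Then for all j > 0: [(lB)^j, b] ∘ l = B(lB)^{j−1} l. -/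
/-- Let `l` be a special deformation retraction as above (operators `b`, `B`
with `b² = 0`, `B² = 0`, `bB + Bb = id − T`; `i`, `p` chain maps for `b` with `p i = id`,
`i p = id + bl + lb`; `p` a chain map for `B`; `l i = 0`, `p l = 0`, `l² = 0`; and `T`
commutes with all maps).  Then for all `j > 0`:
`[(lB)^j, b] ∘ l = B (lB)^{j−1} l`. -/
theorem special_retraction_commutator_lB_pow_b_comp_l
    {C D : Type*} [AddCommGroup C] [Module ℂ C] [AddCommGroup D] [Module ℂ D]
    (bC BC TC : Module.End ℂ C) (bD BD TD : Module.End ℂ D)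
    (i : D →ₗ[ℂ] C) (p : C →ₗ[ℂ] D) (l : Module.End ℂ C)
    (hbC2 : bC * bC = 0) (hBC2 : BC * BC = 0)
    (hbD2 : bD * bD = 0) (hBD2 : BD * BD = 0)
    (hTC : bC * BC + BC * bC = 1 - TC)
    (hTD : bD * BD + BD * bD = 1 - TD)
    (hib : bC ∘ₗ i = i ∘ₗ bD)
    (hpb : bD ∘ₗ p = p ∘ₗ bC)
    (hpB : BD ∘ₗ p = p ∘ₗ BC)
    (hpi : p ∘ₗ i = LinearMap.id)
    (hip : i ∘ₗ p = (1 : Module.End ℂ C) + (bC * l + l * bC))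
    (hli : l ∘ₗ i = 0) (hpl : p ∘ₗ l = 0) (hll : l * l = 0)
    (hTi : TC ∘ₗ i = i ∘ₗ TD) (hTp : TD ∘ₗ p = p ∘ₗ TC)
    (hTl : TC * l = l * TC) (hTb : TC * bC = bC * TC) (hTB : TC * BC = BC * TC)
    (hlTi : ((1 - TC) * l) ∘ₗ i = 0 ∧ (l * (1 - TC)) ∘ₗ i = 0) :
    ∀ m : ℕ,
      ((l * BC) ^ (m + 1) * bC - bC * (l * BC) ^ (m + 1)) * l
        = BC * (l * BC) ^ m * l := by

  -- Basic consequences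
  have hBb : BC * bC = 1 - TC - bC * BC := by
    have := hTC
    linear_combination (norm := noncomm_ring) this
  have hlb : l * bC = i ∘ₗ p - 1 - bC * l := by
    linear_combination (norm := noncomm_ring) -hip
  have hlTl : l * TC * l = 0 := by
    rw [← hTl, mul_assoc, hll, mul_zero]
  have hpBl : p ∘ₗ (BC * l) = 0 := by
    have h1 : p ∘ₗ (BC * l) = BD ∘ₗ (p ∘ₗ l) := by
      rw [show BC * l = BC ∘ₗ l from rfl, ← LinearMap.comp_assoc, ← hpB,
        LinearMap.comp_assoc]
    rw [h1, hpl, LinearMap.comp_zero]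
  have hipBl : (i ∘ₗ p) * (BC * l) = 0 := by
    show (i ∘ₗ p) ∘ₗ (BC * l) = 0
    rw [LinearMap.comp_assoc, hpBl, LinearMap.comp_zero]
  have base : ((l * BC) * bC - bC * (l * BC)) * l = BC * l := by
    calc ((l * BC) * bC - bC * (l * BC)) * l
        = l * (BC * bC) * l - bC * (l * (BC * l)) := by noncomm_ring
      _ = l * (1 - TC - bC * BC) * l - bC * (l * (BC * l)) := by rw [hBb]
      _ = l * l - l * TC * l - (l * bC) * (BC * l) - bC * (l * (BC * l)) := by
          noncomm_ring
      _ = 0 - 0 - (i ∘ₗ p - 1 - bC * l) * (BC * l) - bC * (l * (BC * l)) := by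
          rw [hll, hlTl, hlb]
      _ = -((i ∘ₗ p) * (BC * l)) + BC * l + bC * (l * (BC * l))
            - bC * (l * (BC * l)) := by noncomm_ring
      _ = BC * l := by rw [hipBl]; noncomm_ring
  intro m
  induction m with
  | zero =>
      simp only [zero_add, pow_one, pow_zero, mul_one]
      exact base
  | succ m ih =>
      have expand : ((l * BC) ^ (m + 1 + 1) * bC - bC * (l * BC) ^ (m + 1 + 1)) * l
          = (l * BC) ^ m * (l * BC) * (((l * BC) * bC - bC * (l * BC)) * l)
            + (((l * BC) ^ m * (l * BC) * bC - bC * ((l * BC) ^ m * (l * BC))) * l)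
              * (BC * l) := by
        rw [pow_succ, pow_succ]
        noncomm_ring
      have ih' : ((l * BC) ^ m * (l * BC) * bC - bC * ((l * BC) ^ m * (l * BC))) * l
          = BC * (l * BC) ^ m * l := by
        rw [← pow_succ]
        exact ih
      rw [expand, base, ih']
      have h0 : (l * BC) ^ m * (l * BC) * (BC * l)
          = (l * BC) ^ m * (l * (BC * BC) * l) := by noncomm_ring
      rw [h0, hBC2, pow_succ]
      noncomm_ring
end

section
/- With K = Σ_{j≥0} (lB)^j (a locally finite sum), I = Ki, P = p, H = Kl, one has PI = id and IP = id + [H, B + b]; hence I and P implement a deformation retraction for the total boundary B + b. -/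
/-- With `K = Σ_{j≥0} (lB)^j` (a locally finite sum; here `lB` is assumed
nilpotent, `(lB)^N = 0`, so that `K = Σ_{j<N} (lB)^j`), `I = K i`, `P = p`, `H = K l`,
one has `P I = id` and `I P = id + [H, B + b]`; hence `I` and `P` implement a
deformation retraction for the total boundary `B + b`. -/
theorem special_retraction_total_boundary_deformation_retraction
    {C D : Type*} [AddCommGroup C] [Module ℂ C] [AddCommGroup D] [Module ℂ D]
    (bC BC TC : Module.End ℂ C) (bD BD TD : Module.End ℂ D)
    (i : D →ₗ[ℂ] C) (p : C →ₗ[ℂ] D) (l : Module.End ℂ C)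
    (hbC2 : bC * bC = 0) (hBC2 : BC * BC = 0)
    (hbD2 : bD * bD = 0) (hBD2 : BD * BD = 0)
    (hTC : bC * BC + BC * bC = 1 - TC)
    (hTD : bD * BD + BD * bD = 1 - TD)
    (hib : bC ∘ₗ i = i ∘ₗ bD)
    (hpb : bD ∘ₗ p = p ∘ₗ bC)
    (hpB : BD ∘ₗ p = p ∘ₗ BC)
    (hpi : p ∘ₗ i = LinearMap.id)
    (hip : i ∘ₗ p = (1 : Module.End ℂ C) + (bC * l + l * bC))
    (hli : l ∘ₗ i = 0) (hpl : p ∘ₗ l = 0) (hll : l * l = 0)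
    (hTi : TC ∘ₗ i = i ∘ₗ TD) (hTp : TD ∘ₗ p = p ∘ₗ TC)
    (hTl : TC * l = l * TC) (hTb : TC * bC = bC * TC) (hTB : TC * BC = BC * TC)
    (hlTi : ((1 - TC) * l) ∘ₗ i = 0 ∧ (l * (1 - TC)) ∘ₗ i = 0)
    (N : ℕ) (hN : (l * BC) ^ N = 0) :
    (p ∘ₗ ((∑ j ∈ Finset.range N, (l * BC) ^ j) ∘ₗ i) = LinearMap.id) ∧
    (((∑ j ∈ Finset.range N, (l * BC) ^ j) ∘ₗ i) ∘ₗ p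
      = 1 + (((∑ j ∈ Finset.range N, (l * BC) ^ j) * l) * (BC + bC)
             + (BC + bC) * ((∑ j ∈ Finset.range N, (l * BC) ^ j) * l))) := by
  -- pointwise versions of the composition hypotheses
  have hpl' : ∀ x : C, p (l x) = 0 := fun x => by
    have := LinearMap.ext_iff.mp hpl x; simpa using this
  have hli' : ∀ y : D, l (i y) = 0 := fun y => by
    have := LinearMap.ext_iff.mp hli y; simpa using this
  have hpB' : ∀ x : C, BD (p x) = p (BC x) := fun x => by
    have := LinearMap.ext_iff.mp hpB x; simpa using this
  have hpi' : ∀ y : D, p (i y) = y := fun y => by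
    have := LinearMap.ext_iff.mp hpi y; simpa using this
  rcases N with _ | M
  · -- degenerate case `N = 0`: the algebra `End C` is trivial
    have h10 : (1 : Module.End ℂ C) = 0 := by simpa using hN
    constructor
    · rw [Finset.range_zero, Finset.sum_empty, LinearMap.zero_comp, LinearMap.comp_zero]
      ext y
      have h2 : i y = 0 := by
        have := congrArg (fun f : Module.End ℂ C => f (i y)) h10
        simpa using this
      have := hpi' y
      rw [h2] at this
      simpa using this
    · rw [Finset.range_zero, Finset.sum_empty, LinearMap.zero_comp, LinearMap.zero_comp]
      simp only [zero_mul, mul_zero, add_zero, zero_add]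
      exact h10.symm
  · -- main case `N = M + 1`
    set S : Module.End ℂ C := l * BC + BC * l with hS
    -- basic algebraic facts
    have hBb : BC * bC = 1 - TC - bC * BC := by rw [← hTC]; noncomm_ring
    have hlb : l * bC = (i ∘ₗ p) - 1 - bC * l := by rw [hip]; noncomm_ring
    have hSl : l * S = (l * BC) * l := by
      calc l * S = (l * l) * BC + (l * BC) * l := by rw [hS]; noncomm_ring
        _ = (l * BC) * l := by rw [hll]; noncomm_ring
    have hlSn : ∀ n : ℕ, l * S ^ n = (l * BC) ^ n * l := by
      intro n
      induction n with
      | zero => simp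
      | succ k ih =>
        calc l * S ^ (k + 1) = (l * S ^ k) * S := by rw [pow_succ, ← mul_assoc]
          _ = ((l * BC) ^ k * l) * S := by rw [ih]
          _ = (l * BC) ^ k * ((l * BC) * l) := by rw [mul_assoc, hSl]
          _ = (l * BC) ^ (k + 1) * l := by rw [pow_succ]; noncomm_ring
    have hle : l * (i ∘ₗ p) = 0 := by
      ext x; simp [Module.End.mul_apply, hli']
    have heS : (i ∘ₗ p) * S = 0 := by
      ext x
      simp [hS, Module.End.mul_apply, ← hpB', hpl']
    have heBl : (i ∘ₗ p) * (BC * l) = 0 := by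
      ext x
      simp [Module.End.mul_apply, ← hpB', hpl']
    have heSk : ∀ k : ℕ, (i ∘ₗ p) * S ^ (k + 1) = 0 := by
      intro k
      rw [pow_succ', ← mul_assoc, heS, zero_mul]
    -- the commutator identity  b S = S b + (e B - B e)
    have ht : (bC * BC + BC * bC) * l = l * (bC * BC + BC * bC) := by
      rw [hTC, sub_mul, mul_sub, one_mul, mul_one, hTl]
    have key : bC * S = S * bC + ((i ∘ₗ p) * BC - BC * (i ∘ₗ p)) := by
      calc bC * S
          = ((bC * BC + BC * bC) * l - l * (bC * BC + BC * bC))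
            + (S * bC + ((1 + (bC * l + l * bC)) * BC - BC * (1 + (bC * l + l * bC)))) := by
            rw [hS]; noncomm_ring
        _ = S * bC + ((1 + (bC * l + l * bC)) * BC - BC * (1 + (bC * l + l * bC))) := by
            rw [ht]; noncomm_ring
        _ = S * bC + ((i ∘ₗ p) * BC - BC * (i ∘ₗ p)) := by rw [← hip]
    -- vanishing of S^(M+1)
    have hR : ∀ k : ℕ, ∀ j : ℕ, j + k = M + 1 → (l * BC) ^ j * (l * (bC * S ^ k)) = 0 := by
      intro k
      induction k with
      | zero =>
        intro j hj
        have hj' : j = M + 1 := by omega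
        subst hj'
        rw [hN, zero_mul]
      | succ k ih =>
        intro j hj
        have step1 : l * (bC * S ^ (k + 1))
            = (l * BC) * (l * (bC * S ^ k)) - (l * BC) * ((i ∘ₗ p) * S ^ k) := by
          calc l * (bC * S ^ (k + 1))
              = (l * (bC * S)) * S ^ k := by rw [pow_succ']; noncomm_ring
            _ = (l * (S * bC + ((i ∘ₗ p) * BC - BC * (i ∘ₗ p)))) * S ^ k := by rw [key]
            _ = (l * S) * (bC * S ^ k) + (l * (i ∘ₗ p)) * (BC * S ^ k)
                - (l * BC) * ((i ∘ₗ p) * S ^ k) := by noncomm_ring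
            _ = ((l * BC) * l) * (bC * S ^ k) + 0 * (BC * S ^ k)
                - (l * BC) * ((i ∘ₗ p) * S ^ k) := by rw [hSl, hle]
            _ = (l * BC) * (l * (bC * S ^ k)) - (l * BC) * ((i ∘ₗ p) * S ^ k) := by
                noncomm_ring
        have hterm : (l * BC) ^ (j + 1) * ((i ∘ₗ p) * S ^ k) = 0 := by
          rcases k with _ | k'
          · have hj1 : j + 1 = M + 1 := by omega
            rw [hj1, pow_zero, mul_one, hN, zero_mul]
          · rw [heSk k', mul_zero]
        calc (l * BC) ^ j * (l * (bC * S ^ (k + 1)))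
            = (l * BC) ^ (j + 1) * (l * (bC * S ^ k))
              - (l * BC) ^ (j + 1) * ((i ∘ₗ p) * S ^ k) := by
              rw [step1, pow_succ]; noncomm_ring
          _ = 0 := by rw [ih (j + 1) (by omega), hterm, sub_zero]
    have hlbSN : l * (bC * S ^ (M + 1)) = 0 := by
      have := hR (M + 1) 0 (by omega)
      simpa using this
    have hSN : S ^ (M + 1) = 0 := by
      have h1 : (1 : Module.End ℂ C) = (i ∘ₗ p) - (bC * l + l * bC) := by
        rw [hip]; noncomm_ring
      calc S ^ (M + 1) = ((i ∘ₗ p) - (bC * l + l * bC)) * S ^ (M + 1) := by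
            rw [← h1, one_mul]
        _ = (i ∘ₗ p) * S ^ (M + 1) - bC * (l * S ^ (M + 1)) - l * (bC * S ^ (M + 1)) := by
            noncomm_ring
        _ = 0 := by
            rw [heSk M, hlSn (M + 1), hN, zero_mul, mul_zero, hlbSN]; noncomm_ring
    -- the basic "step" identity
    have hST0 : (l * BC) * (bC * l) = BC * l + bC * (l * S) := by
      calc (l * BC) * (bC * l)
          = l * (BC * bC) * l := by noncomm_ring
        _ = l * (1 - TC - bC * BC) * l := by rw [hBb]
        _ = (l * l) - (l * TC) * l - (l * bC) * (BC * l) := by noncomm_ring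
        _ = (l * l) - TC * (l * l) - (l * bC) * (BC * l) := by
            rw [← hTl]; noncomm_ring
        _ = -((l * bC) * (BC * l)) := by rw [hll]; noncomm_ring
        _ = -(((i ∘ₗ p) - 1 - bC * l) * (BC * l)) := by rw [hlb]
        _ = -((i ∘ₗ p) * (BC * l)) + BC * l + bC * (l * (BC * l)) := by noncomm_ring
        _ = BC * l + bC * ((l * BC) * l) := by rw [heBl, ← mul_assoc]; noncomm_ring
        _ = BC * l + bC * (l * S) := by rw [hSl]
    have hSTn : ∀ m : ℕ, (l * BC) ^ (m + 1) * (bC * l)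
        = BC * (l * S ^ m) + bC * (l * S ^ (m + 1)) := by
      intro m
      induction m with
      | zero => simpa using hST0
      | succ m ih =>
        calc (l * BC) ^ (m + 2) * (bC * l)
            = (l * BC) * ((l * BC) ^ (m + 1) * (bC * l)) := by
              rw [pow_succ']; noncomm_ring
          _ = (l * BC) * (BC * (l * S ^ m) + bC * (l * S ^ (m + 1))) := by rw [ih]
          _ = (l * (BC * BC)) * (l * S ^ m) + (l * BC) * (bC * (l * S ^ (m + 1))) := by
              noncomm_ring
          _ = (l * BC) * (bC * (l * S ^ (m + 1))) := by rw [hBC2]; noncomm_ring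
          _ = ((l * BC) * (bC * l)) * S ^ (m + 1) := by noncomm_ring
          _ = (BC * l + bC * (l * S)) * S ^ (m + 1) := by rw [hST0]
          _ = BC * (l * S ^ (m + 1)) + bC * (l * S ^ (m + 2)) := by
              rw [pow_succ' S (m + 1)]; noncomm_ring
    -- partial-sum identity
    have hP : ∀ m : ℕ,
        (∑ j ∈ Finset.range (m + 1), (l * BC) ^ j * (bC * l)) + BC * (l * S ^ m)
        = ∑ j ∈ Finset.range (m + 1), (BC * l + bC * l) * S ^ j := by
      intro m
      induction m with
      | zero => simp [Finset.sum_range_one]; abel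
      | succ m ih =>
        rw [Finset.sum_range_succ, Finset.sum_range_succ
          (f := fun j => (BC * l + bC * l) * S ^ j), ← ih, hSTn m]
        noncomm_ring
    -- B l S^M = 0
    have hSsplit : ∀ X : Module.End ℂ C, S * X = (l * BC) * X + BC * (l * X) := by
      intro X; rw [hS]; noncomm_ring
    have hlBS1 : (l * BC) * S = (l * BC) * (l * BC) := by
      calc (l * BC) * S = (l * BC) * (l * BC) + (l * (BC * BC)) * l := by
            rw [hS]; noncomm_ring
        _ = (l * BC) * (l * BC) := by rw [hBC2]; noncomm_ring
    have hlBpow : ∀ n : ℕ, (l * BC) * S ^ n = (l * BC) ^ (n + 1) := by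
      intro n
      induction n with
      | zero => simp
      | succ k ih =>
        calc (l * BC) * S ^ (k + 1) = ((l * BC) * S) * S ^ k := by
              rw [pow_succ']; noncomm_ring
          _ = (l * BC) * ((l * BC) * S ^ k) := by rw [hlBS1]; noncomm_ring
          _ = (l * BC) * (l * BC) ^ (k + 1) := by rw [ih]
          _ = (l * BC) ^ (k + 2) := (pow_succ' (l * BC) (k + 1)).symm
    have hBlSM : BC * (l * S ^ M) = 0 := by
      have h2 : S ^ (M + 1) = (l * BC) * S ^ M + BC * (l * S ^ M) := by
        rw [pow_succ']; exact hSsplit (S ^ M)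
      have h3 : BC * (l * S ^ M) = S ^ (M + 1) - (l * BC) * S ^ M := by
        rw [h2]; noncomm_ring
      rw [h3, hSN, hlBpow M, hN]; noncomm_ring
    -- core identity  K (b l) = (B + b) (K l)
    have hcore : (∑ j ∈ Finset.range (M + 1), (l * BC) ^ j) * (bC * l)
        = (BC + bC) * ((∑ j ∈ Finset.range (M + 1), (l * BC) ^ j) * l) := by
      rw [Finset.sum_mul, Finset.sum_mul, Finset.mul_sum]
      have hterm : ∀ j : ℕ, (BC + bC) * ((l * BC) ^ j * l) = (BC * l + bC * l) * S ^ j := by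
        intro j
        rw [← hlSn j]; noncomm_ring
      have hsum : ∑ j ∈ Finset.range (M + 1), (BC + bC) * ((l * BC) ^ j * l)
          = ∑ j ∈ Finset.range (M + 1), (BC * l + bC * l) * S ^ j :=
        Finset.sum_congr rfl fun j _ => hterm j
      rw [hsum, ← hP M, hBlSM, add_zero]
    -- geometric series identity  K (l B) = K - 1
    have hgeom : (∑ j ∈ Finset.range (M + 1), (l * BC) ^ j) * (l * BC)
        = (∑ j ∈ Finset.range (M + 1), (l * BC) ^ j) - 1 := by
      have hg := geom_sum_mul (l * BC) (M + 1)
      rw [hN] at hg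
      calc (∑ j ∈ Finset.range (M + 1), (l * BC) ^ j) * (l * BC)
          = (∑ j ∈ Finset.range (M + 1), (l * BC) ^ j) * ((l * BC) - 1)
            + (∑ j ∈ Finset.range (M + 1), (l * BC) ^ j) := by noncomm_ring
        _ = (0 - 1) + (∑ j ∈ Finset.range (M + 1), (l * BC) ^ j) := by rw [hg]
        _ = (∑ j ∈ Finset.range (M + 1), (l * BC) ^ j) - 1 := by noncomm_ring
    constructor
    · -- P I = id
      have hpK' : ∀ (j : ℕ) (x : C), p (((l * BC) ^ (j + 1) : Module.End ℂ C) x) = 0 := by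
        intro j x
        rw [pow_succ']
        simp [Module.End.mul_apply, hpl']
      ext y
      rw [LinearMap.comp_apply, LinearMap.comp_apply, LinearMap.sum_apply, map_sum,
        Finset.sum_range_succ']
      simp [hpK', hpi']
    · -- I P = id + [H, B + b]
      have hconv : ((∑ j ∈ Finset.range (M + 1), (l * BC) ^ j) ∘ₗ i) ∘ₗ p
          = (∑ j ∈ Finset.range (M + 1), (l * BC) ^ j) * (i ∘ₗ p) := by
        rw [LinearMap.comp_assoc]; rfl
      rw [hconv]
      calc (∑ j ∈ Finset.range (M + 1), (l * BC) ^ j) * (i ∘ₗ p)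
          = (((∑ j ∈ Finset.range (M + 1), (l * BC) ^ j) * (bC * l)
              - (BC + bC) * ((∑ j ∈ Finset.range (M + 1), (l * BC) ^ j) * l))
            + (((∑ j ∈ Finset.range (M + 1), (l * BC) ^ j) - 1)
              - (∑ j ∈ Finset.range (M + 1), (l * BC) ^ j) * (l * BC)))
            + (1 + (((∑ j ∈ Finset.range (M + 1), (l * BC) ^ j) * l) * (BC + bC)
              + (BC + bC) * ((∑ j ∈ Finset.range (M + 1), (l * BC) ^ j) * l))) := by
            rw [hip]; noncomm_ring
        _ = 1 + (((∑ j ∈ Finset.range (M + 1), (l * BC) ^ j) * l) * (BC + bC)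
              + (BC + bC) * ((∑ j ∈ Finset.range (M + 1), (l * BC) ^ j) * l)) := by
            rw [hcore, hgeom]; noncomm_ring
end

section
/- Let G be a finite group acting on a unital ℂ-algebra R, and H = ℂG. The map α: X_G(R)_G → X(R⋊G)_H given on degree-zero by α₀(f⊗x)(s) = f(s)x is a chain isomorphism in degree zero onto (R⋊G)/[R⋊G, H], with inverse β₀(x⋊f) = Σ_r f(r) ⊗ x; in particular α₀ is well-defined on G-coinvariants and β₀α₀ = id, α₀β₀ = id modulo commutators [R⋊G, H]. -/
/-- The crossed product `R ⋊ G` of a unital algebra `R` by a finite group `G`, modelled as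
functions `G → R` (the function `F` encodes `Σ_s F(s) ⋊ s`), has the convolution product
`(F * K)(t) = Σ_r F(r) · (r • K(r⁻¹ t))`. -/
noncomputable def crossedConv {G : Type*} [Group G] [Fintype G]
    {R : Type*} [Ring R] [MulSemiringAction G R]
    (F K : G → R) : G → R :=
  fun t => ∑ r : G, F r * (r • K (r⁻¹ * t))

/-- The element `1 ⋊ t` of the crossed product, i.e. the image of `t ∈ G ⊆ H = ℂG`. -/
noncomputable def deltaCP {G : Type*} [Group G] [DecidableEq G]
    {R : Type*} [Ring R] (t : G) : G → R :=
  fun s => if s = t then 1 else 0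

/-!
Modulo the identifications of the statement, `α₀` and `β₀` are the identity of `G → R`, so
everything reduces to the two subspaces of relations being equal. Right and left
multiplication by `1 ⋊ t` are `K ↦ K(· t⁻¹)` and `K ↦ t • K(t⁻¹ ·)`, so the commutator
`[K, 1 ⋊ t]` is minus the coinvariance relation `t • F − F` of `F = K(· t⁻¹)`; as `K ↦ F`
is a bijection, the set of commutators is the negative of the set of coinvariance
relations, and both span the same subspace.
-/

section CrossedProduct

variable {G : Type*} [Group G] [Fintype G] [DecidableEq G]
  {R : Type*} [Ring R] [MulSemiringAction G R]

theorem crossedConv_deltaCP_right (K : G → R) (t : G) :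
    crossedConv K (deltaCP t) = fun s => K (s * t⁻¹) := by
  funext s
  have hdelta : ∀ r : G, r⁻¹ * s = t ↔ r = s * t⁻¹ := fun r => by
    constructor
    · rintro rfl; group
    · rintro rfl; group
  simp [crossedConv, deltaCP, hdelta]

theorem crossedConv_deltaCP_left (K : G → R) (t : G) :
    crossedConv (deltaCP t) K = fun s => t • K (t⁻¹ * s) := by
  funext s
  simp [crossedConv, deltaCP, ite_mul]

theorem crossedConv_commutator_deltaCP (K : G → R) (t : G) :
    crossedConv K (deltaCP t) - crossedConv (deltaCP t) K =
      -((fun s => t • (fun u => K (u * t⁻¹)) (t⁻¹ * s * t)) - fun u => K (u * t⁻¹)) := by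
  rw [crossedConv_deltaCP_right, crossedConv_deltaCP_left, neg_sub]
  funext s
  simp only [Pi.sub_apply, mul_inv_cancel_right]

theorem crossedConv_commutators_eq_neg_coinvariance :
    {F' : G → R | ∃ (t : G) (K : G → R),
        F' = crossedConv K (deltaCP t) - crossedConv (deltaCP t) K} =
      -{F' : G → R | ∃ (t : G) (F : G → R), F' = (fun s => t • F (t⁻¹ * s * t)) - F} := by
  ext F'
  simp only [Set.mem_ofPred_eq, Set.mem_neg]
  constructor
  · rintro ⟨t, K, rfl⟩
    exact ⟨t, fun u => K (u * t⁻¹), by rw [crossedConv_commutator_deltaCP, neg_neg]⟩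
  · rintro ⟨t, F, hF⟩
    refine ⟨t, fun u => F (u * t), ?_⟩
    simp only [crossedConv_commutator_deltaCP, inv_mul_cancel_right, ← hF, neg_neg]

theorem span_coinvariance_eq_span_crossedConv_commutators (k : Type*) [Ring k] [Module k R] :
    Submodule.span k
        {F' : G → R | ∃ (t : G) (F : G → R), F' = (fun s => t • F (t⁻¹ * s * t)) - F} =
      Submodule.span k {F' : G → R | ∃ (t : G) (K : G → R),
        F' = crossedConv K (deltaCP t) - crossedConv (deltaCP t) K} := by
  rw [crossedConv_commutators_eq_neg_coinvariance, Submodule.span_neg]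

end CrossedProduct

theorem degree_zero_coinvariants_iso_relative_X_complex_general
    {G : Type*} [Group G] [Fintype G] [DecidableEq G]
    {R : Type*} [Ring R] [Algebra ℂ R] [MulSemiringAction G R] :
    ∃ e : ((G → R) ⧸ (Submodule.span ℂ
            {F' : G → R | ∃ (t : G) (F : G → R),
              F' = (fun s => t • F (t⁻¹ * s * t)) - F})) ≃ₗ[ℂ]
          ((G → R) ⧸ (Submodule.span ℂ
            {F' : G → R | ∃ (t : G) (K : G → R),
              F' = crossedConv K (deltaCP t) - crossedConv (deltaCP t) K})),
      ∀ F : G → R,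
        e (Submodule.Quotient.mk F) = Submodule.Quotient.mk F :=
  ⟨Submodule.quotEquivOfEq _ _ (span_coinvariance_eq_span_crossedConv_commutators ℂ),
    fun _ => rfl⟩

/-- Let `G` be a finite group acting on a unital ℂ-algebra `R`, and
`H = ℂG ⊆ R ⋊ G`.  Both `X_G⁰(R) = O_G ⊗ R` and `X⁰(R ⋊ G) = R ⋊ G` are modelled as
`G → R` (an element `f ⊗ x` of `O_G ⊗ R` corresponds to the function `s ↦ f(s)x`, so
that the map `α₀(f ⊗ x)(s) = f(s)x` and its inverse `β₀(x ⋊ f) = Σ_r f(r) ⊗ x` are both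
modelled by the identity map of `G → R`).  The claim that `α₀` is well defined on the
`G`-coinvariants `X_G⁰(R)_G`, is a chain isomorphism in degree zero onto
`(R⋊G)/[R⋊G, H]`, with inverse `β₀` (i.e. `β₀α₀ = id` and `α₀β₀ = id` modulo
commutators `[R⋊G, H]`) is then: the identity map descends to a ℂ-linear isomorphism
between the quotient of `G → R` by the `G`-coinvariance relations `t•F − F` (where
`(t•F)(s) = t • F(t⁻¹ s t)` is the action combining the adjoint action on `O_G` with
the action on `R`) and the quotient of `G → R` by the commutators `[R⋊G, H]`. -/
theorem degree_zero_coinvariants_iso_relative_X_complex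
    {G : Type*} [Group G] [Fintype G] [DecidableEq G]
    {R : Type*} [Ring R] [Algebra ℂ R] [MulSemiringAction G R]
    [SMulCommClass G ℂ R] :
    ∃ e : ((G → R) ⧸ (Submodule.span ℂ
            {F' : G → R | ∃ (t : G) (F : G → R),
              F' = (fun s => t • F (t⁻¹ * s * t)) - F})) ≃ₗ[ℂ]
          ((G → R) ⧸ (Submodule.span ℂ
            {F' : G → R | ∃ (t : G) (K : G → R),
              F' = crossedConv K (deltaCP t) - crossedConv (deltaCP t) K})),
      ∀ F : G → R,
        e (Submodule.Quotient.mk F) = Submodule.Quotient.mk F :=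
  degree_zero_coinvariants_iso_relative_X_complex_general
end
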